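/- Let φ: [0, T] → ℝ solve φ' = −2Lφ − γ(φ² + 1), φ(0) = 1/λ* with L ≥ 0, γ > 0, λ* ∈ (0,1). Then φ is strictly decreasing on its interval of existence, and φ(τ) ≥ λ* for all τ ∈ [0, T] whenever T ≤ T(L, γ, λ*), where T(L,γ,λ) is defined piecewise: for γ > L, T = (1/(Lr))·arctan( r(1−λ) / (2(λ/(1+λ))(γ/L − 1) + 1 + λ) ) with r = √((γ/L)² − 1) (and T = (1/γ)(arctan(1/λ) − arctan(λ)) when L = 0); for γ = L, T = (1/L)(1−λ)/(1+λ); for γ < L, the same formula with arctan replaced by artanh and r = √(1 − (γ/L)²). -/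

import Mathlib

/-!
Along a solution, `q = γφ² + 2Lφ + γ` satisfies the linear equation `q' = -(2γφ + 2L) q`, so `q`
keeps the sign of `q(0) > 0` and `φ' = -q < 0`. Separating variables, the time `φ` needs to fall
from `1/λ*` to `λ*` is `∫_{λ*}^{1/λ*} dx / (γx² + 2Lx + γ)`, and `matiBound L γ λ*` is this
integral in closed form: after normalising by `ρ = γ/L` the primitive is an arctangent for
`ρ > 1`, a rational function for `ρ = 1` and a logarithm for `ρ < 1`.
-/

open Real

/-- The MATI bound function `T(L, γ, λ)` of Carnevale–Teel–Nešić. -/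
noncomputable def matiBound (L γ lam : ℝ) : ℝ :=
  if L = 0 then (1 / γ) * (arctan (1 / lam) - arctan lam)
  else if L < γ then
    (1 / (L * Real.sqrt ((γ / L) ^ 2 - 1))) *
      arctan (Real.sqrt ((γ / L) ^ 2 - 1) * (1 - lam) /
        (2 * (lam / (1 + lam)) * (γ / L - 1) + 1 + lam))
  else if γ = L then (1 / L) * ((1 - lam) / (1 + lam))
  else
    (1 / (L * Real.sqrt (1 - (γ / L) ^ 2))) *
      ((1 / 2) * Real.log
        ((1 + Real.sqrt (1 - (γ / L) ^ 2) * (1 - lam) /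
            (2 * (lam / (1 + lam)) * (γ / L - 1) + 1 + lam)) /
         (1 - Real.sqrt (1 - (γ / L) ^ 2) * (1 - lam) /
            (2 * (lam / (1 + lam)) * (γ / L - 1) + 1 + lam))))

open Set

theorem pos_of_linear_ODE {q c : ℝ → ℝ} {a b : ℝ} (hc : ContinuousOn c (Icc a b))
    (hq : ∀ t ∈ Icc a b, HasDerivAt q (c t * q t) t) (ha : 0 < q a) :
    ∀ t ∈ Icc a b, 0 < q t := by
  obtain ⟨K, hK⟩ := isCompact_Icc.exists_bound_of_continuousOn hc
  intro t ht
  by_contra! hqt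
  obtain ⟨t₀, ht₀, hqt₀⟩ := intermediate_value_Icc' ht.1
    (fun s hs => (hq s ⟨hs.1, hs.2.trans ht.2⟩).continuousAt.continuousWithinAt) ⟨hqt, ha.le⟩
  have hsub : Icc a t₀ ⊆ Icc a b := Icc_subset_Icc_right (ht₀.2.trans ht.2)
  have hlip : ∀ s ∈ Ioc a t₀, LipschitzOnWith K.toNNReal (fun x => c s * x) univ := by
    refine fun s hs => ((lipschitzWith_smul (c s)).weaken ?_).lipschitzOnWith
    rw [← NNReal.coe_le_coe, coe_nnnorm]
    exact (hK s (hsub (Ioc_subset_Icc_self hs))).trans (Real.le_coe_toNNReal K)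
  have hzero : EqOn q 0 (Icc a t₀) :=
    ODE_solution_unique_of_mem_Icc_left (v := fun s x => c s * x) (s := fun _ => univ) hlip
      (fun s hs => (hq s (hsub hs)).continuousAt.continuousWithinAt)
      (fun s hs => (hq s (hsub (Ioc_subset_Icc_self hs))).hasDerivWithinAt)
      (fun _ _ => mem_univ _) continuousOn_const
      (fun s _ => by
        rw [Pi.zero_apply, mul_zero]; exact hasDerivWithinAt_const s (Iic s) (0 : ℝ))
      (fun _ _ => mem_univ _) hqt₀
  exact ha.ne' (hzero (left_mem_Icc.2 ht₀.1))

theorem strictAntiOn_of_hasDerivAt_neg_quadratic {φ : ℝ → ℝ} {L γ T : ℝ} (hL : 0 ≤ L)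
    (hγ : 0 < γ) (hφ : ∀ t ∈ Icc 0 T, HasDerivAt φ (-(γ * φ t ^ 2 + 2 * L * φ t + γ)) t)
    (h0 : 0 < φ 0) : StrictAntiOn φ (Icc 0 T) := by
  have hq : ∀ t ∈ Icc 0 T, HasDerivAt (fun s => γ * φ s ^ 2 + 2 * L * φ s + γ)
      (-(2 * γ * φ t + 2 * L) * (γ * φ t ^ 2 + 2 * L * φ t + γ)) t := fun t ht => by
    refine ((((hφ t ht).pow 2).const_mul γ).add ((hφ t ht).const_mul (2 * L))).add_const γ
      |>.congr_deriv ?_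
    push_cast
    ring
  have hcont : ContinuousOn φ (Icc 0 T) := fun t ht => (hφ t ht).continuousAt.continuousWithinAt
  have hpos := pos_of_linear_ODE (by fun_prop) hq (by positivity)
  exact strictAntiOn_of_hasDerivWithinAt_neg (convex_Icc 0 T) hcont
    (fun t ht => (hφ t (interior_subset ht)).hasDerivWithinAt)
    (fun t ht => neg_neg_of_pos (hpos t (interior_subset ht)))

theorem sub_eq_of_hasDerivAt_neg_comp {φ f F : ℝ → ℝ} {a b : ℝ} (hab : a ≤ b)
    (hφ : ∀ t ∈ Icc a b, HasDerivAt φ (-f (φ t)) t)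
    (hF : ∀ t ∈ Icc a b, HasDerivAt F (f (φ t))⁻¹ (φ t))
    (hf : ∀ t ∈ Icc a b, f (φ t) ≠ 0) : F (φ a) - F (φ b) = b - a := by
  have hG : ∀ t ∈ Icc a b, HasDerivAt (fun s => F (φ s) + s) 0 t := fun t ht => by
    refine (((hF t ht).comp t (hφ t ht)).add (hasDerivAt_id t)).congr_deriv ?_
    rw [mul_neg, inv_mul_cancel₀ (hf t ht)]
    ring
  have := constant_of_has_deriv_right_zero
    (fun t ht => (hG t ht).continuousAt.continuousWithinAt)
    (fun t ht => (hG t (Ico_subset_Icc_self ht)).hasDerivWithinAt) b (right_mem_Icc.2 hab)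
  linarith

theorem le_of_hasDerivAt_neg_comp {φ f F : ℝ → ℝ} {lam T : ℝ} (hanti : AntitoneOn φ (Icc 0 T))
    (hφ : ∀ t ∈ Icc 0 T, HasDerivAt φ (-f (φ t)) t)
    (hF : ∀ x ∈ Icc lam (φ 0), HasDerivAt F (f x)⁻¹ x) (hf : ∀ x ∈ Icc lam (φ 0), f x ≠ 0)
    (hlam : lam ≤ φ 0) (hT : T ≤ F (φ 0) - F lam) : ∀ τ ∈ Icc 0 T, lam ≤ φ τ := by
  intro τ hτ
  by_contra! hτlam
  obtain ⟨t₁, ht₁, hφt₁⟩ := intermediate_value_Icc' hτ.1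
    (fun s hs => (hφ s ⟨hs.1, hs.2.trans hτ.2⟩).continuousAt.continuousWithinAt) ⟨hτlam.le, hlam⟩
  have hsub : Icc 0 t₁ ⊆ Icc 0 T := Icc_subset_Icc_right (ht₁.2.trans hτ.2)
  have hrange : ∀ t ∈ Icc 0 t₁, φ t ∈ Icc lam (φ 0) := fun t ht =>
    ⟨hφt₁ ▸ hanti (hsub ht) (hsub (right_mem_Icc.2 ht₁.1)) ht.2,
      hanti (hsub (left_mem_Icc.2 ht₁.1)) (hsub ht) ht.1⟩
  have htime := sub_eq_of_hasDerivAt_neg_comp ht₁.1 (fun t ht => hφ t (hsub ht))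
    (fun t ht => hF _ (hrange t ht)) (fun t ht => hf _ (hrange t ht))
  have ht₁τ : t₁ ≠ τ := fun h => hτlam.ne (h ▸ hφt₁)
  rw [hφt₁] at htime
  linarith [lt_of_le_of_ne ht₁.2 ht₁τ, hτ.2]

/- Primitives of `x ↦ (ρx² + 2x + ρ)⁻¹`, the normalised rate `L (γx² + 2Lx + γ)⁻¹` for
`ρ = γ/L`: with `r = √(ρ² - 1)` when `ρ > 1`, and with `s = √(1 - ρ²)` when `ρ < 1`. -/

noncomputable def arctanPrimitive (ρ r x : ℝ) : ℝ := arctan ((ρ * x + 1) / r) / r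

theorem hasDerivAt_arctanPrimitive {ρ r : ℝ} (hr : r ^ 2 = ρ ^ 2 - 1) (hr0 : r ≠ 0) (x : ℝ) :
    HasDerivAt (arctanPrimitive ρ r) (ρ * x ^ 2 + 2 * x + ρ)⁻¹ x := by
  have hρ : ρ ≠ 0 := by rintro rfl; nlinarith [sq_pos_of_ne_zero hr0]
  have hlin : HasDerivAt (fun y => (ρ * y + 1) / r) (ρ / r) x := by
    simpa using (((hasDerivAt_id x).const_mul ρ).add_const 1).div_const r
  have hsq : 1 + ((ρ * x + 1) / r) ^ 2 = ρ * (ρ * x ^ 2 + 2 * x + ρ) / r ^ 2 := by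
    field_simp
    linear_combination hr
  refine ((hlin.arctan).div_const r).congr_deriv ?_
  rw [hsq]
  field_simp

theorem arctanPrimitive_one_div_sub {ρ r lam : ℝ} (hr : r ^ 2 = ρ ^ 2 - 1) (hr0 : r ≠ 0)
    (hρ : 0 < ρ) (hlam : 0 < lam) :
    arctanPrimitive ρ r (1 / lam) - arctanPrimitive ρ r lam =
      arctan (r * (1 - lam) / (2 * (lam / (1 + lam)) * (ρ - 1) + 1 + lam)) / r := by
  have huv : ((ρ * (1 / lam) + 1) / r) * -((ρ * lam + 1) / r) < 1 := by
    have : 0 < ((ρ * (1 / lam) + 1) / r) * ((ρ * lam + 1) / r) := by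
      rw [div_mul_div_comm, ← sq]; positivity
    linarith
  rw [arctanPrimitive, arctanPrimitive, ← sub_div, sub_eq_add_neg, ← arctan_neg, arctan_add huv]
  congr 2
  have h1uv : 1 - (ρ * (1 / lam) + 1) / r * -((ρ * lam + 1) / r) =
      ρ * (2 * lam * ρ + 1 + lam ^ 2) / (lam * r ^ 2) := by
    field_simp
    linear_combination lam * hr
  have hden : 2 * (lam / (1 + lam)) * (ρ - 1) + 1 + lam =
      (2 * lam * ρ + 1 + lam ^ 2) / (1 + lam) := by
    field_simp; ring
  rw [h1uv, hden]
  field_simp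
  ring

noncomputable def logPrimitive (ρ s x : ℝ) : ℝ :=
  (log (ρ * x + 1 - s) - log (ρ * x + 1 + s)) / (2 * s)

theorem hasDerivAt_logPrimitive {ρ s x : ℝ} (hs : s ^ 2 = 1 - ρ ^ 2) (hρ : ρ ≠ 0) (hs0 : 0 < s)
    (hx : s < ρ * x + 1) : HasDerivAt (logPrimitive ρ s) (ρ * x ^ 2 + 2 * x + ρ)⁻¹ x := by
  have hlin (c : ℝ) : HasDerivAt (fun y => ρ * y + 1 + c) ρ x := by
    simpa using (((hasDerivAt_id x).const_mul ρ).add_const 1).add_const c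
  have hm := (hlin (-s)).log (by linarith)
  have hp := (hlin s).log (by linarith)
  simp only [← sub_eq_add_neg] at hm
  refine ((hm.sub hp).div_const (2 * s)).congr_deriv ?_
  have h1 : ρ * x + 1 - s ≠ 0 := by linarith
  have h2 : ρ * x + 1 + s ≠ 0 := by linarith
  rw [show ρ * x ^ 2 + 2 * x + ρ = (ρ * x + 1 - s) * (ρ * x + 1 + s) / ρ by
    field_simp; linear_combination hs]
  field_simp
  ring

theorem logPrimitive_one_div_sub {ρ s lam : ℝ} (hs : s ^ 2 = 1 - ρ ^ 2) (hs0 : 0 < s)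
    (hρ : 0 < ρ) (hlam : 0 < lam) :
    logPrimitive ρ s (1 / lam) - logPrimitive ρ s lam =
      1 / 2 * log ((1 + s * (1 - lam) / (2 * (lam / (1 + lam)) * (ρ - 1) + 1 + lam)) /
        (1 - s * (1 - lam) / (2 * (lam / (1 + lam)) * (ρ - 1) + 1 + lam))) / s := by
  have hs1 : s < 1 := by nlinarith
  have ha : s < ρ * (1 / lam) + 1 := by
    have : 0 < ρ * (1 / lam) := by positivity
    linarith
  have hb : s < ρ * lam + 1 := by nlinarith
  have hD : 0 < 2 * lam * ρ + 1 + lam ^ 2 := by positivity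
  have hden : 2 * (lam / (1 + lam)) * (ρ - 1) + 1 + lam =
      (2 * lam * ρ + 1 + lam ^ 2) / (1 + lam) := by
    field_simp; ring
  have hprod₁ : (ρ * (1 / lam) + 1 - s) * (ρ * lam + 1 + s) =
      ρ / lam * (2 * lam * ρ + 1 + lam ^ 2 + s * (1 - lam ^ 2)) := by
    field_simp; linear_combination (-lam) * hs
  have hprod₂ : (ρ * (1 / lam) + 1 + s) * (ρ * lam + 1 - s) =
      ρ / lam * (2 * lam * ρ + 1 + lam ^ 2 - s * (1 - lam ^ 2)) := by
    field_simp; linear_combination (-lam) * hs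
  have hE : 0 < 2 * lam * ρ + 1 + lam ^ 2 - s * (1 - lam ^ 2) := by
    refine pos_of_mul_pos_right (a := ρ / lam) ?_ (by positivity)
    rw [← hprod₂]; exact mul_pos (by linarith) (by linarith)
  have hratio : (1 + s * (1 - lam) / ((2 * lam * ρ + 1 + lam ^ 2) / (1 + lam))) /
        (1 - s * (1 - lam) / ((2 * lam * ρ + 1 + lam ^ 2) / (1 + lam))) =
      (ρ * (1 / lam) + 1 - s) * (ρ * lam + 1 + s) /
        ((ρ * (1 / lam) + 1 + s) * (ρ * lam + 1 - s)) := by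
    rw [hprod₁, hprod₂, mul_div_mul_left _ _ (by positivity)]
    field_simp
    ring
  rw [hden, hratio, log_div (by positivity) (by positivity),
    log_mul (by positivity) (by positivity), log_mul (by positivity) (by positivity),
    logPrimitive, logPrimitive]
  ring

theorem hasDerivAt_div_const_of_normalized {G : ℝ → ℝ} {L γ x : ℝ} (hL : L ≠ 0)
    (hG : HasDerivAt G (γ / L * x ^ 2 + 2 * x + γ / L)⁻¹ x) :
    HasDerivAt (fun y => G y / L) (γ * x ^ 2 + 2 * L * x + γ)⁻¹ x := by
  refine (hG.div_const L).congr_deriv ?_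
  rw [show γ / L * x ^ 2 + 2 * x + γ / L = (γ * x ^ 2 + 2 * L * x + γ) / L by field_simp,
    inv_div, div_right_comm, div_self hL, one_div]

theorem exists_primitive_sub_eq_matiBound {L γ lam : ℝ} (hL : 0 ≤ L) (hγ : 0 < γ)
    (hlam : 0 < lam) :
    ∃ F : ℝ → ℝ, (∀ x, 0 < x → HasDerivAt F (γ * x ^ 2 + 2 * L * x + γ)⁻¹ x) ∧
      F (1 / lam) - F lam = matiBound L γ lam := by
  rcases hL.eq_or_lt with rfl | hL
  · refine ⟨fun x => arctan x / γ, fun x _ => ?_, ?_⟩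
    · refine ((hasDerivAt_arctan x).div_const γ).congr_deriv ?_
      field_simp
      ring
    · rw [matiBound, if_pos rfl]
      ring
  have hρ : 0 < γ / L := by positivity
  rcases lt_trichotomy L γ with hlt | rfl | hgt
  · have hρ1 : 1 < γ / L := (one_lt_div hL).2 hlt
    have hr : √((γ / L) ^ 2 - 1) ^ 2 = (γ / L) ^ 2 - 1 := sq_sqrt (by nlinarith)
    have hr0 : √((γ / L) ^ 2 - 1) ≠ 0 := (sqrt_pos.2 (by nlinarith)).ne'
    refine ⟨fun x => arctanPrimitive (γ / L) √((γ / L) ^ 2 - 1) x / L,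
      fun x _ => hasDerivAt_div_const_of_normalized hL.ne' (hasDerivAt_arctanPrimitive hr hr0 x),
      ?_⟩
    rw [matiBound, if_neg hL.ne', if_pos hlt, ← sub_div,
      arctanPrimitive_one_div_sub hr hr0 hρ hlam]
    field_simp
  · refine ⟨fun x => -(x + 1)⁻¹ / L, fun x hx => hasDerivAt_div_const_of_normalized hL.ne' ?_, ?_⟩
    · rw [div_self hL.ne']
      have hx1 : x + 1 ≠ 0 := by positivity
      refine (((hasDerivAt_id' x).add_const 1).inv hx1).neg.congr_deriv ?_
      field_simp
      ring
    · rw [matiBound, if_neg hL.ne', if_neg (lt_irrefl L), if_pos rfl]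
      field_simp
      ring
  · have hρ1 : γ / L < 1 := (div_lt_one hL).2 hgt
    have hs : √(1 - (γ / L) ^ 2) ^ 2 = 1 - (γ / L) ^ 2 := sq_sqrt (by nlinarith)
    have hs0 : 0 < √(1 - (γ / L) ^ 2) := sqrt_pos.2 (by nlinarith)
    have hs1 : √(1 - (γ / L) ^ 2) < 1 := by nlinarith
    refine ⟨fun x => logPrimitive (γ / L) √(1 - (γ / L) ^ 2) x / L,
      fun x hx => hasDerivAt_div_const_of_normalized hL.ne'
        (hasDerivAt_logPrimitive hs hρ.ne' hs0 (by nlinarith)), ?_⟩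
    rw [matiBound, if_neg hL.ne', if_neg hgt.not_gt, if_neg hgt.ne, ← sub_div,
      logPrimitive_one_div_sub hs hs0 hρ hlam]
    field_simp

theorem stmt18_general (φ : ℝ → ℝ) (L γ lamS T : ℝ)
    (hL : 0 ≤ L) (hγ : 0 < γ) (hS0 : 0 < lamS) (hS1 : lamS < 1)
    (hode : ∀ τ ∈ Set.Icc (0 : ℝ) T,
      HasDerivAt φ (-2 * L * φ τ - γ * ((φ τ) ^ 2 + 1)) τ)
    (hinit : φ 0 = 1 / lamS) :
    StrictAntiOn φ (Set.Icc (0 : ℝ) T) ∧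
      (T ≤ matiBound L γ lamS → ∀ τ ∈ Set.Icc (0 : ℝ) T, lamS ≤ φ τ) := by
  have hode' : ∀ τ ∈ Icc 0 T, HasDerivAt φ (-(γ * φ τ ^ 2 + 2 * L * φ τ + γ)) τ :=
    fun τ hτ => (hode τ hτ).congr_deriv (by ring)
  have hanti := strictAntiOn_of_hasDerivAt_neg_quadratic hL hγ hode' (by rw [hinit]; positivity)
  refine ⟨hanti, fun hTm => ?_⟩
  obtain ⟨F, hF, hFval⟩ := exists_primitive_sub_eq_matiBound hL hγ hS0
  have hpos : ∀ x ∈ Icc lamS (φ 0), 0 < x := fun x hx => hS0.trans_le hx.1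
  have hlam : lamS ≤ φ 0 := by
    rw [hinit, le_div_iff₀ hS0]
    nlinarith
  exact le_of_hasDerivAt_neg_comp (f := fun x => γ * x ^ 2 + 2 * L * x + γ) hanti.antitoneOn
    hode' (fun x hx => hF x (hpos x hx)) (fun x hx => by have := hpos x hx; positivity) hlam
    (by rwa [hinit, hFval])

/-- The solution of the clock dynamics `φ' = −2Lφ − γ(φ² + 1)`, `φ(0) = 1/λ*`,
is strictly decreasing and stays above `λ*` on `[0, T]` whenever
`T ≤ T(L, γ, λ*)`. -/
theorem stmt18 (φ : ℝ → ℝ) (L γ lamS T : ℝ)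
    (hL : 0 ≤ L) (hγ : 0 < γ) (hS0 : 0 < lamS) (hS1 : lamS < 1)
    (hT : 0 ≤ T)
    (hode : ∀ τ ∈ Set.Icc (0 : ℝ) T,
      HasDerivAt φ (-2 * L * φ τ - γ * ((φ τ) ^ 2 + 1)) τ)
    (hinit : φ 0 = 1 / lamS) :
    StrictAntiOn φ (Set.Icc (0 : ℝ) T) ∧
      (T ≤ matiBound L γ lamS → ∀ τ ∈ Set.Icc (0 : ℝ) T, lamS ≤ φ τ) :=
  stmt18_general φ L γ lamS T hL hγ hS0 hS1 hode hinit
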